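/- arXiv:1807.10701 — 2 statements merged into one kernel-verified Lean document; each statement's English description precedes it below -/
import Mathlib

section
/- Let M > 1. There exists a constant C = C(M) such that for every λ > 0 and all symmetric 2×2 matrices A, B with |A| ≤ M|B|, one has g_λ(A) ≤ C·g_λ(B). -/
/-!
With `σ = √λ` and `m(t) = max(t, t² / σ)`, one has `m(|ξ|) ≤ g_λ(ξ) ≤ 3 m(|ξ|)`. This only uses
`|ξ|² = τ₁² + τ₂²`, `det ξ = τ₁ τ₂` and `ρ⁰(ξ) = |τ₁| + |τ₂|`, which give `|ξ| ≤ ρ⁰(ξ) ≤ √2 |ξ|`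
and `4 |det ξ| ≤ ρ⁰(ξ)²`. Since `m` is monotone and `m(M t) ≤ M² m(t)` for `M ≥ 1`,
`g_λ(A) ≤ 3 m(M |B|) ≤ 3 M² g_λ(B)`.
-/

open Matrix

/-- Eigenvalue τ₁ of a symmetric 2×2 real matrix (larger root). -/
noncomputable def tau1 (ξ : Matrix (Fin 2) (Fin 2) ℝ) : ℝ :=
  ((ξ 0 0 + ξ 1 1) + Real.sqrt ((ξ 0 0 - ξ 1 1) ^ 2 + 4 * (ξ 0 1) ^ 2)) / 2

/-- Eigenvalue τ₂ of a symmetric 2×2 real matrix (smaller root). -/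
noncomputable def tau2 (ξ : Matrix (Fin 2) (Fin 2) ℝ) : ℝ :=
  ((ξ 0 0 + ξ 1 1) - Real.sqrt ((ξ 0 0 - ξ 1 1) ^ 2 + 4 * (ξ 0 1) ^ 2)) / 2

/-- ρ⁰(ξ) = |τ₁(ξ)| + |τ₂(ξ)|. -/
noncomputable def rho0 (ξ : Matrix (Fin 2) (Fin 2) ℝ) : ℝ := |tau1 ξ| + |tau2 ξ|

/-- Frobenius norm of a 2×2 matrix. -/
noncomputable def frob (ξ : Matrix (Fin 2) (Fin 2) ℝ) : ℝ :=
  Real.sqrt (∑ i, ∑ j, (ξ i j) ^ 2)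

/-- The function g_λ. -/
noncomputable def gl (l : ℝ) (ξ : Matrix (Fin 2) (Fin 2) ℝ) : ℝ :=
  if rho0 ξ ≤ Real.sqrt l then 2 * (rho0 ξ - |ξ.det| / Real.sqrt l)
  else (frob ξ) ^ 2 / Real.sqrt l + Real.sqrt l

lemma frob_nonneg (ξ : Matrix (Fin 2) (Fin 2) ℝ) : 0 ≤ frob ξ := Real.sqrt_nonneg _

lemma rho0_nonneg (ξ : Matrix (Fin 2) (Fin 2) ℝ) : 0 ≤ rho0 ξ :=
  add_nonneg (abs_nonneg _) (abs_nonneg _)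

lemma sq_sqrt_discr (ξ : Matrix (Fin 2) (Fin 2) ℝ) :
    Real.sqrt ((ξ 0 0 - ξ 1 1) ^ 2 + 4 * ξ 0 1 ^ 2) ^ 2 = (ξ 0 0 - ξ 1 1) ^ 2 + 4 * ξ 0 1 ^ 2 :=
  Real.sq_sqrt (by positivity)

section Eigenvalues

variable {ξ : Matrix (Fin 2) (Fin 2) ℝ}

lemma tau1_mul_tau2 (hξ : ξ.IsSymm) : tau1 ξ * tau2 ξ = ξ.det := by
  rw [det_fin_two, hξ.apply 0 1, tau1, tau2]
  linear_combination (-1 / 4 : ℝ) * sq_sqrt_discr ξ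

lemma tau1_sq_add_tau2_sq (hξ : ξ.IsSymm) : tau1 ξ ^ 2 + tau2 ξ ^ 2 = frob ξ ^ 2 := by
  rw [frob, Real.sq_sqrt (by positivity), tau1, tau2]
  simp only [Fin.sum_univ_two, hξ.apply 0 1]
  linear_combination (1 / 2 : ℝ) * sq_sqrt_discr ξ

lemma frob_le_rho0 (hξ : ξ.IsSymm) : frob ξ ≤ rho0 ξ := by
  refine (pow_le_pow_iff_left₀ (frob_nonneg ξ) (rho0_nonneg ξ) two_ne_zero).1 ?_
  rw [← tau1_sq_add_tau2_sq hξ, rho0, ← sq_abs (tau1 ξ), ← sq_abs (tau2 ξ)]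
  nlinarith [abs_nonneg (tau1 ξ), abs_nonneg (tau2 ξ)]

lemma rho0_sq_le_two_mul_frob_sq (hξ : ξ.IsSymm) : rho0 ξ ^ 2 ≤ 2 * frob ξ ^ 2 := by
  rw [← tau1_sq_add_tau2_sq hξ, rho0, ← sq_abs (tau1 ξ), ← sq_abs (tau2 ξ)]
  nlinarith [sq_nonneg (|tau1 ξ| - |tau2 ξ|)]

lemma four_mul_abs_det_le_rho0_sq (hξ : ξ.IsSymm) : 4 * |ξ.det| ≤ rho0 ξ ^ 2 := by
  rw [← tau1_mul_tau2 hξ, abs_mul, rho0]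
  nlinarith [sq_nonneg (|tau1 ξ| - |tau2 ξ|)]

end Eigenvalues

noncomputable def linQuadMax (σ t : ℝ) : ℝ := max t (t ^ 2 / σ)

lemma linQuadMax_mono {σ s t : ℝ} (hσ : 0 ≤ σ) (hs : 0 ≤ s) (hst : s ≤ t) :
    linQuadMax σ s ≤ linQuadMax σ t :=
  max_le_max hst (div_le_div_of_nonneg_right (pow_le_pow_left₀ hs hst 2) hσ)

lemma linQuadMax_mul_le {σ c t : ℝ} (hc : 1 ≤ c) (ht : 0 ≤ t) :
    linQuadMax σ (c * t) ≤ c ^ 2 * linQuadMax σ t := by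
  have hct : c * t ≤ c ^ 2 * t := by
    nlinarith [mul_nonneg (mul_nonneg (zero_le_one.trans hc) (sub_nonneg.2 hc)) ht]
  rw [linQuadMax, linQuadMax, mul_max_of_nonneg _ _ (sq_nonneg c), mul_pow, mul_div_assoc]
  exact max_le_max hct le_rfl

section Comparison

variable {l : ℝ} {ξ : Matrix (Fin 2) (Fin 2) ℝ}

lemma linQuadMax_le_gl (hl : 0 < l) (hξ : ξ.IsSymm) :
    linQuadMax (Real.sqrt l) (frob ξ) ≤ gl l ξ := by
  have hσ : 0 < Real.sqrt l := Real.sqrt_pos.2 hl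
  have hF := frob_nonneg ξ
  have hFρ := frob_le_rho0 hξ
  rw [gl, linQuadMax]
  split_ifs with hρ
  · have hdet : |ξ.det| / Real.sqrt l ≤ rho0 ξ / 4 := by
      rw [div_le_div_iff₀ hσ four_pos]
      nlinarith [four_mul_abs_det_le_rho0_sq hξ, rho0_nonneg ξ]
    have hF2 : frob ξ ^ 2 / Real.sqrt l ≤ frob ξ := by
      rw [div_le_iff₀ hσ]
      nlinarith
    refine max_le ?_ (hF2.trans ?_) <;> linarith
  · have hF2 : frob ξ ≤ frob ξ ^ 2 / Real.sqrt l + Real.sqrt l := by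
      rw [div_add' _ _ _ hσ.ne', le_div_iff₀ hσ]
      nlinarith [sq_nonneg (frob ξ - Real.sqrt l)]
    exact max_le hF2 (le_add_of_nonneg_right hσ.le)

lemma gl_le_three_mul_linQuadMax (hl : 0 < l) (hξ : ξ.IsSymm) :
    gl l ξ ≤ 3 * linQuadMax (Real.sqrt l) (frob ξ) := by
  have hσ : 0 < Real.sqrt l := Real.sqrt_pos.2 hl
  have hF := frob_nonneg ξ
  have hρF := rho0_sq_le_two_mul_frob_sq hξ
  rw [gl, linQuadMax]
  split_ifs with hρ
  · have hdet : 0 ≤ |ξ.det| / Real.sqrt l := div_nonneg (abs_nonneg _) hσ.le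
    have hρ3 : 2 * rho0 ξ ≤ 3 * frob ξ := by nlinarith [rho0_nonneg ξ]
    linarith [le_max_left (frob ξ) (frob ξ ^ 2 / Real.sqrt l)]
  · have hσF : Real.sqrt l ≤ 2 * (frob ξ ^ 2 / Real.sqrt l) := by
      rw [← mul_div_assoc, le_div_iff₀ hσ]
      nlinarith
    linarith [le_max_right (frob ξ) (frob ξ ^ 2 / Real.sqrt l)]

end Comparison

theorem stmt4 (M : ℝ) (hM : 1 < M) :
    ∃ C : ℝ, 0 < C ∧ ∀ (l : ℝ), 0 < l → ∀ A B : Matrix (Fin 2) (Fin 2) ℝ,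
      A.IsSymm → B.IsSymm → frob A ≤ M * frob B → gl l A ≤ C * gl l B := by
  refine ⟨3 * M ^ 2, by positivity, fun l hl A B hA hB hAB => ?_⟩
  have hσ : 0 ≤ Real.sqrt l := Real.sqrt_nonneg l
  calc gl l A ≤ 3 * linQuadMax (Real.sqrt l) (frob A) := gl_le_three_mul_linQuadMax hl hA
    _ ≤ 3 * linQuadMax (Real.sqrt l) (M * frob B) := by
      gcongr
      exact linQuadMax_mono hσ (frob_nonneg A) hAB
    _ ≤ 3 * (M ^ 2 * linQuadMax (Real.sqrt l) (frob B)) := by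
      gcongr
      exact linQuadMax_mul_le hM.le (frob_nonneg B)
    _ ≤ 3 * M ^ 2 * gl l B := by
      rw [← mul_assoc]
      gcongr
      exact linQuadMax_le_gl hl hB
end

section
/- Let x, y ∈ ℝ with 0 < |x| and |x| + |y| < √λ. Then the infimum over α, β ∈ (0,1) of β(√λ + (x² + y²/β²)/√λ) + (1-β)·α(√λ + x²/α²/√λ) is at most 2(|x| + |y| - |xy|/√λ); in particular choosing α = |x|/√λ and β = |y|/(√λ - |x|) achieves this value. -/
open Set Filter Topology

section Laminate

variable {s x y α β : ℝ}

/-- Cost of the second-order laminate with volume fractions `β` (outer) and `α` (inner);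
here `s` plays the role of `√λ`. -/
noncomputable def laminateCost (s x y α β : ℝ) : ℝ :=
  β * (s + (x ^ 2 + y ^ 2 / β ^ 2) / s) + (1 - β) * α * (s + x ^ 2 / α ^ 2 / s)

def laminateCosts (s x y : ℝ) : Set ℝ :=
  {z | ∃ α ∈ Ioo (0:ℝ) 1, ∃ β ∈ Ioo (0:ℝ) 1, z = laminateCost s x y α β}

lemma laminateCost_nonneg (hs : 0 ≤ s) (hα : 0 ≤ α) (hβ : 0 ≤ β) (hβ1 : β ≤ 1) :
    0 ≤ laminateCost s x y α β := by
  have : 0 ≤ 1 - β := sub_nonneg.2 hβ1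
  unfold laminateCost
  positivity

lemma sInf_laminateCosts_le (hs : 0 ≤ s) (hα : α ∈ Ioo 0 1) (hβ : β ∈ Ioo 0 1) :
    sInf (laminateCosts s x y) ≤ laminateCost s x y α β := by
  refine csInf_le ⟨0, ?_⟩ ⟨α, hα, β, hβ, rfl⟩
  rintro z ⟨α, hα, β, hβ, rfl⟩
  exact laminateCost_nonneg hs hα.1.le hβ.1.le hβ.2.le

lemma div_mem_Ioo_zero_one {a b : ℝ} (ha : 0 < a) (hab : a < b) : a / b ∈ Ioo 0 1 :=
  ⟨div_pos ha (ha.trans hab), (div_lt_one (ha.trans hab)).2 hab⟩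

/-- By AM–GM, `α ↦ α s + x² / (α s)` is minimised at `α = |x| / s`. -/
lemma abs_div_mul_add_sq_div_eq (hx : x ≠ 0) (hs : s ≠ 0) :
    |x| / s * (s + x ^ 2 / (|x| / s) ^ 2 / s) = 2 * |x| := by
  have : |x| ≠ 0 := abs_ne_zero.2 hx
  field_simp
  rw [sq_abs]
  ring

lemma laminateCost_abs_div (hx : x ≠ 0) (hy : y ≠ 0) (hs : s ≠ 0) (hxs : s - |x| ≠ 0) :
    laminateCost s x y (|x| / s) (|y| / (s - |x|)) = 2 * (|x| + |y| - |x * y| / s) := by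
  have : |y| ≠ 0 := abs_ne_zero.2 hy
  rw [laminateCost, mul_assoc (1 - _), abs_div_mul_add_sq_div_eq hx hs, abs_mul,
    ← sq_abs x, ← sq_abs y]
  field_simp
  ring

lemma laminateCost_zero_abs_div (hx : x ≠ 0) (hs : s ≠ 0) (β : ℝ) :
    laminateCost s x 0 (|x| / s) β = β * (s + x ^ 2 / s) + (1 - β) * (2 * |x|) := by
  rw [laminateCost, mul_assoc (1 - _), abs_div_mul_add_sq_div_eq hx hs]
  simp

/-- For `y = 0` the bound is not attained, only approached as `β → 0`. -/
lemma sInf_laminateCosts_zero_le (hs : 0 < s) (hx : 0 < |x|) (hxs : |x| < s) :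
    sInf (laminateCosts s x 0) ≤ 2 * |x| := by
  have hlim : Tendsto (fun β ↦ laminateCost s x 0 (|x| / s) β) (𝓝[>] 0) (𝓝 (2 * |x|)) := by
    simp_rw [laminateCost_zero_abs_div (abs_pos.1 hx) hs.ne']
    have hcont : Continuous fun β : ℝ ↦ β * (s + x ^ 2 / s) + (1 - β) * (2 * |x|) := by
      fun_prop
    simpa using (hcont.tendsto 0).mono_left nhdsWithin_le_nhds
  refine ge_of_tendsto hlim ?_
  filter_upwards [Ioo_mem_nhdsGT one_pos] with β hβ
  exact sInf_laminateCosts_le hs.le (div_mem_Ioo_zero_one hx hxs) hβ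

end Laminate

theorem stmt14_general (l x y : ℝ) (hx : 0 < |x|)
    (hsum : |x| + |y| < Real.sqrt l) :
    sInf {z : ℝ | ∃ α ∈ Ioo (0:ℝ) 1, ∃ β ∈ Ioo (0:ℝ) 1,
        z = β * (Real.sqrt l + (x ^ 2 + y ^ 2 / β ^ 2) / Real.sqrt l)
          + (1 - β) * α * (Real.sqrt l + x ^ 2 / α ^ 2 / Real.sqrt l)}
      ≤ 2 * (|x| + |y| - |x * y| / Real.sqrt l) ∧
    (y ≠ 0 →
      |x| / Real.sqrt l ∈ Ioo (0:ℝ) 1 ∧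
      |y| / (Real.sqrt l - |x|) ∈ Ioo (0:ℝ) 1 ∧
      (|y| / (Real.sqrt l - |x|)) *
          (Real.sqrt l + (x ^ 2 + y ^ 2 / (|y| / (Real.sqrt l - |x|)) ^ 2) / Real.sqrt l)
        + (1 - |y| / (Real.sqrt l - |x|)) * (|x| / Real.sqrt l) *
          (Real.sqrt l + x ^ 2 / (|x| / Real.sqrt l) ^ 2 / Real.sqrt l)
      = 2 * (|x| + |y| - |x * y| / Real.sqrt l)) := by
  set s := Real.sqrt l
  have hxs : |x| < s := (le_add_of_nonneg_right (abs_nonneg y)).trans_lt hsum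
  have hs : 0 < s := hx.trans hxs
  have hα : |x| / s ∈ Ioo 0 1 := div_mem_Ioo_zero_one hx hxs
  have hβ (hy : y ≠ 0) : |y| / (s - |x|) ∈ Ioo 0 1 :=
    div_mem_Ioo_zero_one (abs_pos.2 hy) (lt_sub_iff_add_lt'.2 hsum)
  have hcost (hy : y ≠ 0) := laminateCost_abs_div (abs_pos.1 hx) hy hs.ne' (sub_pos.2 hxs).ne'
  refine ⟨?_, fun hy ↦ ⟨hα, hβ hy, hcost hy⟩⟩
  change sInf (laminateCosts s x y) ≤ _
  rcases eq_or_ne y 0 with rfl | hy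
  · simpa using sInf_laminateCosts_zero_le hs hx hxs
  · exact hcost hy ▸ sInf_laminateCosts_le hs.le hα (hβ hy)

theorem stmt14 (l x y : ℝ) (hl : 0 < l) (hx : 0 < |x|)
    (hsum : |x| + |y| < Real.sqrt l) :
    sInf {z : ℝ | ∃ α ∈ Ioo (0:ℝ) 1, ∃ β ∈ Ioo (0:ℝ) 1,
        z = β * (Real.sqrt l + (x ^ 2 + y ^ 2 / β ^ 2) / Real.sqrt l)
          + (1 - β) * α * (Real.sqrt l + x ^ 2 / α ^ 2 / Real.sqrt l)}
      ≤ 2 * (|x| + |y| - |x * y| / Real.sqrt l) ∧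
    (y ≠ 0 →
      |x| / Real.sqrt l ∈ Ioo (0:ℝ) 1 ∧
      |y| / (Real.sqrt l - |x|) ∈ Ioo (0:ℝ) 1 ∧
      (|y| / (Real.sqrt l - |x|)) *
          (Real.sqrt l + (x ^ 2 + y ^ 2 / (|y| / (Real.sqrt l - |x|)) ^ 2) / Real.sqrt l)
        + (1 - |y| / (Real.sqrt l - |x|)) * (|x| / Real.sqrt l) *
          (Real.sqrt l + x ^ 2 / (|x| / Real.sqrt l) ^ 2 / Real.sqrt l)
      = 2 * (|x| + |y| - |x * y| / Real.sqrt l)) :=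
  stmt14_general l x y hx hsum
end
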